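/- For every L there exist infinitely many runs of more than L consecutive non-squarefree integers: for all natural numbers L and M there exists N > M such that none of the integers N, N+1, …, N+L is squarefree. -/

import Mathlib

/-!
By the Chinese remainder theorem there is an `N` with `p_i ^ 2 ∣ N + i` for `i = 0, …, L`, where
`p_i` is the `i`-th prime; adding multiples of `∏ p_i ^ 2` makes `N` as large as we like.
-/

open Function

namespace Nat

theorem exists_forall_dvd_add_of_pairwise_coprime (t : Finset ℕ) (m : ℕ → ℕ)
    (hm : ∀ i ∈ t, m i ≠ 0) (hcop : (t : Set ℕ).Pairwise (Coprime on m)) :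
    ∃ k, ∀ i ∈ t, m i ∣ k + i := by
  obtain ⟨k, hk⟩ := chineseRemainderOfFinset (fun i => (m i - 1) * i) m t hm hcop
  refine ⟨k, fun i hi => modEq_zero_iff_dvd.1 ?_⟩
  obtain ⟨n, hn⟩ := exists_eq_succ_of_ne_zero (hm i hi)
  calc k + i ≡ (m i - 1) * i + i [MOD m i] := (hk i hi).add_right i
    _ = m i * i := by rw [hn]; simp only [succ_sub_one, succ_mul]
    _ ≡ 0 [MOD m i] := modEq_zero_iff_dvd.2 (dvd_mul_right _ _)

theorem exists_gt_forall_dvd_add_of_pairwise_coprime (t : Finset ℕ) (m : ℕ → ℕ)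
    (hm : ∀ i ∈ t, m i ≠ 0) (hcop : (t : Set ℕ).Pairwise (Coprime on m)) (M : ℕ) :
    ∃ N > M, ∀ i ∈ t, m i ∣ N + i := by
  obtain ⟨k, hk⟩ := exists_forall_dvd_add_of_pairwise_coprime t m hm hcop
  have hP : 0 < ∏ i ∈ t, m i := pos_of_ne_zero (Finset.prod_ne_zero_iff.2 hm)
  refine ⟨k + (M + 1) * ∏ i ∈ t, m i, ?_, fun i hi => ?_⟩
  · have := Nat.le_mul_of_pos_right (M + 1) hP
    omega
  · rw [add_right_comm]
    exact dvd_add (hk i hi) (dvd_mul_of_dvd_right (Finset.dvd_prod_of_mem m hi) _)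

theorem pairwise_coprime_sq_nth_prime : Pairwise (Coprime on fun i => nth Prime i ^ 2) :=
  fun i j hij => Coprime.pow 2 2 <| (coprime_primes (prime_nth_prime i) (prime_nth_prime j)).2
    fun h => hij (nth_injective infinite_setOfPred_prime h)

end Nat

/-- For every `L` there exist infinitely many runs of more than `L` consecutive
non-squarefree integers: for all `L M` there exists `N > M` such that none of
`N, N+1, …, N+L` is squarefree. -/
theorem infinitely_many_long_nonsquarefree_runs :
    ∀ L M : ℕ, ∃ N : ℕ, N > M ∧ ∀ i ≤ L, ¬ Squarefree (N + i) := by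
  intro L M
  obtain ⟨N, hNM, hN⟩ := Nat.exists_gt_forall_dvd_add_of_pairwise_coprime (Finset.range (L + 1))
    (fun i => Nat.nth Nat.Prime i ^ 2) (fun i _ => pow_ne_zero _ (Nat.prime_nth_prime i).ne_zero)
    (Nat.pairwise_coprime_sq_nth_prime.set_pairwise _) M
  refine ⟨N, hNM, fun i hi hsq => (Nat.prime_nth_prime i).not_isUnit (hsq _ ?_)⟩
  rw [← sq]
  exact hN i (Finset.mem_range_succ_iff.2 hi)
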